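/- arXiv:1504.02075 — 2 statements merged into one kernel-verified Lean document; each statement's English description precedes it below -/
import Mathlib

section
/- Let m, n be coprime positive integers and D an (m,n)-Dyck path with rank complement D̄. Then the south-end ranks satisfy S(D̄) = max(S(D)) - S(D), i.e., s is a south-end rank of D if and only if max(S(D)) - s is a south-end rank of D̄. -/
open Nat

/-- Number of north steps among the first `i` steps of the path `P`
(`true` = north step `N`, `false` = east step `E`). -/
def nSteps (P : List Bool) (i : ℕ) : ℕ := (P.take i).count true

/-- Number of east steps among the first `i` steps. -/
def eSteps (P : List Bool) (i : ℕ) : ℕ := (P.take i).count false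

/-- Rank `m*b - n*a` of the `i`-th lattice point `(a,b)` of the path. -/
def rank (m n : ℕ) (P : List Bool) (i : ℕ) : ℤ :=
  (m : ℤ) * nSteps P i - (n : ℤ) * eSteps P i

/-- A lattice path from `(0,0)` to `(m,n)`: `m+n` unit steps, `n` of them north. -/
def IsPath (m n : ℕ) (P : List Bool) : Prop :=
  P.length = m + n ∧ P.count true = n

/-- An `(m,n)`-Dyck path: a path staying weakly above the diagonal,
equivalently with all ranks nonnegative. -/
def IsDyck (m n : ℕ) (P : List Bool) : Prop :=
  IsPath m n P ∧ ∀ i ≤ m + n, 0 ≤ rank m n P i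

/-- The set of ranks of the first `m+n` lattice points of the path. -/
def rankSet (m n : ℕ) (P : List Bool) : Finset ℤ :=
  (Finset.range (m + n)).image (rank m n P)

/-- Ranks of south ends (starting points of north steps). -/
def southRanks (m n : ℕ) (P : List Bool) : Finset ℤ :=
  ((Finset.range (m + n)).filter (fun i => P.getD i false = true)).image (rank m n P)

/-- Ranks of west ends (starting points of east steps). -/
def westRanks (m n : ℕ) (P : List Bool) : Finset ℤ :=
  ((Finset.range (m + n)).filter (fun i => P.getD i true = false)).image (rank m n P)

/-- Transpose of a path: reverse the word and exchange `N` and `E`. -/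
def transpose (P : List Bool) : List Bool := (P.map (fun b => !b)).reverse

/-- `D'` is the rank complement of `D`: its rank set is `M - r(D)`
where `M` is the maximum rank of `D`. -/
def IsRankComplement (m n : ℕ) (D D' : List Bool) : Prop :=
  ∃ M : ℤ, IsGreatest (↑(rankSet m n D) : Set ℤ) M ∧
    rankSet m n D' = (rankSet m n D).image (fun r => M - r)

/-- A partition, encoded as a weakly decreasing list of positive integers. -/
def IsPartition (L : List ℕ) : Prop :=
  L.Pairwise (· ≥ ·) ∧ ∀ x ∈ L, 0 < x

/-- Hook length of the cell in (0-based) row `i`, column `j`. -/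
def hook (L : List ℕ) (i j : ℕ) : ℕ :=
  L.getD i 0 - j + (L.drop (i + 1)).countP (fun x => decide (j < x))

/-- `L` is an `n`-core: no hook length is divisible by `n`. -/
def IsCore (n : ℕ) (L : List ℕ) : Prop :=
  ∀ i < L.length, ∀ j < L.getD i 0, ¬ (n ∣ hook L i j)

/-- The set of first-column hook lengths of `L`. -/
def firstColHooks (L : List ℕ) : Finset ℕ :=
  (Finset.range L.length).image (fun i => hook L i 0)

/-- Conjugate (transpose) partition. -/
def conjugate (L : List ℕ) : List ℕ :=
  (List.range (L.getD 0 0)).map (fun j => L.countP (fun x => decide (j < x)))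

/-- `H` is `n`-flush: no element is a multiple of `n`, and it is closed
under subtracting `n` while staying positive. -/
def IsFlush (n : ℕ) (H : Finset ℕ) : Prop :=
  (∀ h ∈ H, ¬ (n ∣ h)) ∧ ∀ h ∈ H, n < h → h - n ∈ H

/-- `s_i^n(H)`: the maximum of `((n+H) ∪ {i}) ∩ (i + nℤ)`. -/
def sFun (n : ℕ) (H : Finset ℕ) (i : ℕ) : ℕ :=
  (insert i ((H.filter (fun h => h % n = i % n)).image (fun h => h + n))).max'
    (Finset.insert_nonempty _ _)

/-- `S^n(H) = {s_0, ..., s_{n-1}}`. -/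
def sSet (n : ℕ) (H : Finset ℕ) : Finset ℕ := (Finset.range n).image (sFun n H)

/-- The lattice point `(a,b)` lies strictly to the right of the path `D`
inside the `m × n` rectangle: every lattice point of `D` at height `b`
has `x`-coordinate less than `a`. -/
def StrictlyRightOf (m n : ℕ) (D : List Bool) (a b : ℕ) : Prop :=
  a ≤ m ∧ b ≤ n ∧ ∀ i ≤ m + n, (D.take i).count true = b → (D.take i).count false < a

/-- The positive ranks of lattice points lying strictly to the right of `D`. -/
def andersonSet (m n : ℕ) (D : List Bool) : Set ℕ :=
  {h | 0 < h ∧ ∃ a b : ℕ, StrictlyRightOf m n D a b ∧ (h : ℤ) = (m : ℤ) * b - (n : ℤ) * a}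

/-- The `x`-coordinate of the vertical step of `D` at height `y`
(the number of east steps taken at heights `≤ y`). -/
def southX (D : List Bool) (y : ℕ) : ℕ :=
  (List.range D.length).countP
    (fun i => decide (D.getD i true = false ∧ (D.take i).count true ≤ y))

/-- The partition formed by the cells above the path `D`
inside a rectangle of height `n`. -/
def pathPartition (n : ℕ) (D : List Bool) : List ℕ :=
  (((List.range n).reverse).map (fun y => southX D y)).filter (fun x => decide (0 < x))

/-- Arm of the cell `(i,j)` of `L`. -/
def armL (L : List ℕ) (i j : ℕ) : ℕ := L.getD i 0 - (j + 1)

/-- Leg of the cell `(i,j)` of `L`. -/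
def legL (L : List ℕ) (i j : ℕ) : ℕ := (L.drop (i + 1)).countP (fun x => decide (j < x))

/-- The dinv statistic of an `(m,n)`-Dyck path: the number of cells `c` of the
partition above the path with `arm(c)/(leg(c)+1) ≤ m/n < (arm(c)+1)/leg(c)`. -/
def dinv (m n : ℕ) (D : List Bool) : ℕ :=
  ((Finset.range (pathPartition n D).length ×ˢ Finset.range m).filter
    (fun p => p.2 < (pathPartition n D).getD p.1 0 ∧
      armL (pathPartition n D) p.1 p.2 * n ≤ m * (legL (pathPartition n D) p.1 p.2 + 1) ∧
      m * legL (pathPartition n D) p.1 p.2 < n * (armL (pathPartition n D) p.1 p.2 + 1))).card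

/-- `codinv(D) = #{(r_s, r_w) : r_s ∈ S(D), r_w ∈ W(D), r_s < r_w}`. -/
def codinv (m n : ℕ) (D : List Bool) : ℕ :=
  ((southRanks m n D ×ˢ westRanks m n D).filter (fun p => p.1 < p.2)).card

/-- The skew length of an `(m,n)`-core: the number of cells lying both in an
`n`-row (a row `i` with `h_i + n ∈ S^n(H_λ)`) and in the `m`-boundary
(hook length `< m`). -/
def skewLength (m n : ℕ) (L : List ℕ) : ℕ :=
  ((Finset.range L.length ×ˢ Finset.range (L.headD 0)).filter
    (fun p => p.2 < L.getD p.1 0 ∧ hook L p.1 p.2 < m ∧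
      hook L p.1 0 + n ∈ sSet n (firstColHooks L))).card

/-!
Write `R(D)` for the ranks of the points of `D` other than its endpoint. Ranks along a path are
`m * i` modulo `m + n`, so by coprimality the `m + n` ranks are distinct and a rank `r + m` can
only be reached from a point of rank `r` by the north step leaving it (the cyclic wrap-around
would end at the origin, of rank `0 ≤ r < r + m`). Hence `S(D) = {r ∈ R(D) | r + m ∈ R(D)}`,
and `max S(D) = max R(D) - m` because a highest point is entered by a north step.
Substituting `R(D̄) = M - R(D)` into this description of `S(D̄)` gives
`S(D̄) = (M - m) - S(D)`.
-/

section Rank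

variable {m n i : ℕ} {P : List Bool}

lemma rank_zero : rank m n P 0 = 0 := by
  simp [rank, nSteps, eSteps]

lemma rank_succ_of_north (hi : i < P.length) (h : P.getD i false = true) :
    rank m n P (i + 1) = rank m n P i + m := by
  rw [rank, rank, nSteps, nSteps, eSteps, eSteps, List.take_succ_eq_append_getElem hi,
    ← List.getD_eq_getElem P false hi, h]
  simp only [List.count_append, List.count_cons_self, List.count_nil, List.count_cons_of_ne,
    ne_eq, Bool.true_eq_false, not_false_eq_true]
  push_cast
  ring

lemma rank_succ_of_east (hi : i < P.length) (h : P.getD i false = false) :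
    rank m n P (i + 1) = rank m n P i - n := by
  rw [rank, rank, nSteps, nSteps, eSteps, eSteps, List.take_succ_eq_append_getElem hi,
    ← List.getD_eq_getElem P false hi, h]
  simp only [List.count_append, List.count_cons_self, List.count_nil, List.count_cons_of_ne,
    ne_eq, Bool.false_eq_true, not_false_eq_true]
  push_cast
  ring

lemma nSteps_add_eSteps (P : List Bool) (i : ℕ) : nSteps P i + eSteps P i = min i P.length := by
  rw [nSteps, eSteps, List.count_true_add_count_false, List.length_take]

lemma IsPath.rank_endpoint (hP : IsPath m n P) : rank m n P (m + n) = 0 := by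
  have hN : nSteps P (m + n) = n := by
    rw [nSteps, List.take_of_length_le hP.1.le, hP.2]
  have hE : eSteps P (m + n) = m := by
    have := nSteps_add_eSteps P (m + n)
    rw [hP.1, min_self] at this
    omega
  simp only [rank, hN, hE]
  ring

lemma IsPath.rank_modEq (hP : IsPath m n P) (hi : i ≤ m + n) :
    rank m n P i ≡ m * i [ZMOD m + n] := by
  have h := nSteps_add_eSteps P i
  rw [hP.1, min_eq_left hi] at h
  rw [Int.modEq_iff_dvd]
  refine ⟨eSteps P i, ?_⟩
  unfold rank
  have h' : (nSteps P i : ℤ) + eSteps P i = i := by exact_mod_cast h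
  linear_combination -(m : ℤ) * h'

end Rank

section Dyck

variable {m n i j : ℕ} {P D : List Bool} {r : ℤ}

lemma mem_rankSet : r ∈ rankSet m n P ↔ ∃ i < m + n, rank m n P i = r := by
  simp [rankSet]

lemma mem_southRanks :
    r ∈ southRanks m n P ↔ ∃ i < m + n, P.getD i false = true ∧ rank m n P i = r := by
  simp [southRanks, and_assoc]

lemma IsPath.eq_succ_of_rank_eq_add (hP : IsPath m n P) (hco : m.Coprime n) (hi : i < m + n)
    (hj : j < m + n) (h : rank m n P j = rank m n P i + m) :
    j = i + 1 ∨ (j = 0 ∧ i + 1 = m + n) := by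
  have hmod : m * j ≡ m * (i + 1) [MOD m + n] := by
    rw [← Int.natCast_modEq_iff]
    push_cast
    calc (m : ℤ) * j ≡ rank m n P j [ZMOD m + n] := (hP.rank_modEq hj.le).symm
      _ = rank m n P i + m := h
      _ ≡ m * i + m [ZMOD m + n] := (hP.rank_modEq hi.le).add_right m
      _ = m * (i + 1) := by ring
  have hji := hmod.cancel_left_of_coprime (Nat.coprime_self_add_right.mpr hco).symm
  rw [Nat.ModEq, Nat.mod_eq_of_lt hj] at hji
  rcases (show i + 1 ≤ m + n from hi).lt_or_eq with hlt | heq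
  · exact .inl (by rwa [Nat.mod_eq_of_lt hlt] at hji)
  · exact .inr ⟨by rwa [heq, Nat.mod_self] at hji, heq⟩

lemma IsDyck.nonneg_of_mem_rankSet (hD : IsDyck m n D) (hr : r ∈ rankSet m n D) : 0 ≤ r := by
  obtain ⟨i, hi, rfl⟩ := mem_rankSet.mp hr
  exact hD.2 i hi.le

lemma IsDyck.mem_rankSet_of_mem_southRanks (hm : 0 < m) (hD : IsDyck m n D)
    (hr : r ∈ southRanks m n D) : r ∈ rankSet m n D ∧ r + m ∈ rankSet m n D := by
  obtain ⟨i, hi, hN, rfl⟩ := mem_southRanks.mp hr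
  have hsucc := rank_succ_of_north (m := m) (n := n) (hD.1.1 ▸ hi) hN
  -- the last point has rank `0`, which is smaller than `rank i + m`
  have hi' : i + 1 < m + n := by
    by_contra! hle
    have := hD.1.rank_endpoint
    have := hD.2 i hi.le
    rw [show i + 1 = m + n by omega] at hsucc
    omega
  exact ⟨mem_rankSet.mpr ⟨i, hi, rfl⟩, mem_rankSet.mpr ⟨i + 1, hi', hsucc⟩⟩

lemma IsDyck.mem_southRanks_iff (hm : 0 < m) (hco : m.Coprime n) (hD : IsDyck m n D) :
    r ∈ southRanks m n D ↔ r ∈ rankSet m n D ∧ r + m ∈ rankSet m n D := by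
  refine ⟨hD.mem_rankSet_of_mem_southRanks hm, fun ⟨hr, hrm⟩ => ?_⟩
  obtain ⟨i, hi, rfl⟩ := mem_rankSet.mp hr
  obtain ⟨j, hj, hrj⟩ := mem_rankSet.mp hrm
  have hilen : i < D.length := hD.1.1 ▸ hi
  rcases hD.1.eq_succ_of_rank_eq_add hco hi hj hrj with rfl | ⟨rfl, -⟩
  · refine mem_southRanks.mpr ⟨i, hi, ?_, rfl⟩
    by_contra hE
    rw [rank_succ_of_east hilen (by simpa using hE)] at hrj
    omega
  · have := hD.2 i hi.le
    rw [rank_zero] at hrj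
    omega

lemma IsDyck.isGreatest_southRanks (hm : 0 < m) (hn : 0 < n) (hD : IsDyck m n D) {M : ℤ}
    (hM : IsGreatest (rankSet m n D : Set ℤ) M) (hS : (southRanks m n D).Nonempty) :
    IsGreatest (southRanks m n D : Set ℤ) (M - m) := by
  refine ⟨?_, fun s hs => ?_⟩
  · obtain ⟨s, hs⟩ := hS
    obtain ⟨hs₀, hsm⟩ := hD.mem_rankSet_of_mem_southRanks hm hs
    have hMpos : 0 < M := by linarith [hM.2 hsm, hD.nonneg_of_mem_rankSet hs₀]
    -- a highest point is not the origin, and it is entered by a north step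
    obtain ⟨i, hi, hiM⟩ := mem_rankSet.mp hM.1
    obtain ⟨k, rfl⟩ : ∃ k, i = k + 1 :=
      Nat.exists_eq_succ_of_ne_zero (by rintro rfl; rw [rank_zero] at hiM; omega)
    have hk : k < D.length := hD.1.1 ▸ (by omega)
    have hkM : rank m n D k ≤ M := hM.2 (mem_rankSet.mpr ⟨k, by omega, rfl⟩)
    cases hN : D.getD k false
    · rw [rank_succ_of_east hk hN] at hiM
      omega
    · rw [rank_succ_of_north hk hN] at hiM
      exact mem_southRanks.mpr ⟨k, by omega, hN, by omega⟩
  · linarith [hM.2 (hD.mem_rankSet_of_mem_southRanks hm hs).2]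

end Dyck

/-- For an `(m,n)`-Dyck path `D` with rank complement `D'`,
the south-end ranks satisfy `S(D') = max(S(D)) - S(D)`. -/
theorem southRanks_complement (m n : ℕ) (hm : 0 < m) (hn : 0 < n)
    (hco : Nat.Coprime m n) (D D' : List Bool)
    (hD : IsDyck m n D) (hD' : IsDyck m n D')
    (hcomp : IsRankComplement m n D D') (Ms : ℤ)
    (hMs : IsGreatest (↑(southRanks m n D) : Set ℤ) Ms) :
    southRanks m n D' = (southRanks m n D).image (fun s => Ms - s) := by
  obtain ⟨M, hM, hR'⟩ := hcomp
  obtain rfl : Ms = M - m := hMs.unique (hD.isGreatest_southRanks hm hn hM ⟨Ms, hMs.1⟩)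
  ext r
  simp only [hD'.mem_southRanks_iff hm hco, hR', Finset.mem_image, hD.mem_southRanks_iff hm hco]
  constructor
  · rintro ⟨⟨a, ha, rfl⟩, ⟨b, hb, hab⟩⟩
    exact ⟨b, ⟨hb, by rwa [show b + m = a by omega]⟩, by omega⟩
  · rintro ⟨s, ⟨hs, hsm⟩, rfl⟩
    exact ⟨⟨s + m, hsm, by ring⟩, ⟨s, hs, by ring⟩⟩
end

section
/- Let m, n be coprime positive integers. There is a bijection α from (m,n)-Dyck paths to (m,n)-cores, where α(D) is the unique partition whose first-column hook lengths are exactly the positive ranks of the lattice points lying strictly to the right of D inside the m×n rectangle (equivalently, the positive integers of the form a*m - b*n, 0 ≤ b < m, 0 ≤ a < n, that lie above/right of D). -/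
open Nat

/-!
A partition is determined by its set `H` of first-column hooks, and the hooks of row `i` are the
`d ∈ [1, h_i]` with `h_i - d ∉ H`; hence the partition is an `n`-core iff `H` is `n`-flush.
A Dyck path is determined by the `x`-coordinates `x 0 ≤ ⋯ ≤ x (n-1)` of its north steps, subject
to `n * x b ≤ m * b`.

As `m` and `n` are coprime, a rank `m b - n a` with `b < n` and `n a < m b` determines `(a, b)`.
So the Anderson set `{m b - n a | x b < a, n a < m b}` determines `x`; it is `n`-flush (step right)
and `m`-flush (step down, as `x` is monotone). Conversely, if `H` is `m`- and `n`-flush, every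
`h ∈ H` with `h ≡ m b (mod n)` is `< m b` (descend by steps of `m`), and these `h` are the `k_b`
smallest positive integers of their class mod `n`; so `H` is the Anderson set of
`x b = ⌊m b / n⌋ - k_b`.
-/

open Finset

lemma lt_of_mul_lt_mul_of_lt {m n a b : ℕ} (hb : b < n) (h : n * a < m * b) : a < m := by
  by_contra ha
  have := Nat.mul_le_mul (not_lt.mp ha) hb.le
  nlinarith

lemma le_of_mul_le_mul_of_lt {m n a b : ℕ} (hb : b < n) (h : n * a ≤ m * b) : a ≤ m := by
  by_contra ha
  have := Nat.mul_le_mul (not_le.mp ha) hb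
  nlinarith

lemma List.countP_take_eq_card {α : Type*} (l : List α) (p : α → Bool) (d : α) {i : ℕ}
    (hi : i ≤ l.length) : (l.take i).countP p = #{k ∈ Finset.range i | p (l.getD k d)} := by
  induction i with
  | zero => simp
  | succ i ih =>
    rw [List.take_add_one, List.getElem?_eq_getElem (by omega), List.countP_append, ih (by omega),
      Finset.range_add_one, filter_insert, List.getD_eq_getElem _ _ (by omega)]
    split_ifs with h <;> simp [h]

lemma List.countP_drop_eq_card {α : Type*} (l : List α) (p : α → Bool) (d : α) (i : ℕ) :
    (l.drop (i + 1)).countP p = #{k ∈ Ioo i l.length | p (l.getD k d)} := by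
  rcases le_or_gt l.length i with hi | hi
  · rw [List.drop_of_length_le (by omega), Ioo_eq_empty (by omega)]
    simp
  have hsum := congrArg (List.countP p) (List.take_append_drop (i + 1) l)
  have hall := List.countP_take_eq_card l p d (le_refl l.length)
  rw [List.countP_append, List.countP_take_eq_card l p d (by omega)] at hsum
  rw [List.take_length] at hall
  have hunion : Finset.range l.length = Finset.range (i + 1) ∪ Ioo i l.length := by
    ext k; simp only [Finset.mem_union, Finset.mem_range, Finset.mem_Ioo]; omega
  have hdisj : _root_.Disjoint (Finset.range (i + 1)) (Ioo i l.length) := by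
    simp only [Finset.disjoint_left, Finset.mem_range, Finset.mem_Ioo]; omega
  rw [hunion, filter_union, card_union_of_disjoint (disjoint_filter_filter hdisj)] at hall
  omega

lemma List.Pairwise.getElem_add_le {s : List ℕ} (hs : s.Pairwise (· > ·)) {i j : ℕ} (hij : i ≤ j)
    (hj : j < s.length) : s[j] + (j - i) ≤ s[i] := by
  induction j, hij using Nat.le_induction with
  | base => simp
  | succ j hij ih =>
    have := List.pairwise_iff_getElem.mp hs j (j + 1) (by omega) hj (by omega)
    have := ih (by omega)
    omega

section Hooks

variable {L : List ℕ}

lemma IsPartition.getD_pos (hL : IsPartition L) {i : ℕ} (hi : i < L.length) :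
    0 < L.getD i 0 := by
  rw [List.getD_eq_getElem _ _ hi]
  exact hL.2 _ (List.getElem_mem hi)

lemma IsPartition.getD_le_getD (hL : IsPartition L) {i j : ℕ} (hij : i ≤ j)
    (hj : j < L.length) : L.getD j 0 ≤ L.getD i 0 := by
  rcases hij.eq_or_lt with rfl | hij
  · rfl
  rw [List.getD_eq_getElem _ _ hj, List.getD_eq_getElem _ _ (hij.trans hj)]
  exact List.pairwise_iff_getElem.mp hL.1 i j _ hj hij

lemma hook_eq_card (i j : ℕ) :
    hook L i j = L.getD i 0 - j + #{k ∈ Ioo i L.length | j < L.getD k 0} := by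
  rw [hook, List.countP_drop_eq_card L _ 0]
  simp

lemma hook_zero (hL : IsPartition L) {i : ℕ} (hi : i < L.length) :
    hook L i 0 = L.getD i 0 + (L.length - 1 - i) := by
  rw [hook_eq_card, filter_true_of_mem fun k hk => hL.getD_pos (mem_Ioo.mp hk).2, Nat.card_Ioo]
  omega

lemma hook_zero_lt (hL : IsPartition L) {i j : ℕ} (hij : i < j) (hj : j < L.length) :
    hook L j 0 < hook L i 0 := by
  rw [hook_zero hL hj, hook_zero hL (hij.trans hj)]
  have := hL.getD_le_getD hij.le hj
  omega

lemma hook_zero_le_hook_zero (hL : IsPartition L) {i k : ℕ} (hki : k ≤ i) (hi : i < L.length) :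
    hook L i 0 ≤ hook L k 0 := by
  rcases hki.eq_or_lt with rfl | hki
  · rfl
  · exact (hook_zero_lt hL hki hi).le

lemma hook_zero_injOn (hL : IsPartition L) : Set.InjOn (hook L · 0) (Set.Iio L.length) :=
  StrictAntiOn.injOn fun _ _ _ hj hij => hook_zero_lt hL hij hj

lemma mem_firstColHooks {x : ℕ} : x ∈ firstColHooks L ↔ ∃ i < L.length, hook L i 0 = x := by
  simp [firstColHooks]

lemma IsPartition.pos_of_mem_firstColHooks (hL : IsPartition L) {x : ℕ}
    (hx : x ∈ firstColHooks L) : 0 < x := by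
  obtain ⟨i, hi, rfl⟩ := mem_firstColHooks.mp hx
  rw [hook_zero hL hi]
  have := hL.getD_pos hi
  omega

lemma hook_pos_and_le (hL : IsPartition L) {i j : ℕ} (hi : i < L.length) (hj : j < L.getD i 0) :
    0 < hook L i j ∧ hook L i j ≤ hook L i 0 := by
  rw [hook_eq_card, hook_zero hL hi]
  have := (card_filter_le (Ioo i L.length) (fun k => j < L.getD k 0)).trans_eq (Nat.card_Ioo _ _)
  omega

lemma hook_lt_hook {i j j' : ℕ} (hjj' : j < j') (hj' : j' < L.getD i 0) :
    hook L i j' < hook L i j := by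
  rw [hook_eq_card, hook_eq_card]
  have : #{k ∈ Ioo i L.length | j' < L.getD k 0} ≤ #{k ∈ Ioo i L.length | j < L.getD k 0} :=
    card_le_card fun k hk => by
      simp only [mem_filter] at hk ⊢
      exact ⟨hk.1, hjj'.trans hk.2⟩
  omega

lemma hook_injOn_row (i : ℕ) : Set.InjOn (hook L i) (Set.Iio (L.getD i 0)) :=
  StrictAntiOn.injOn fun _ _ _ hj' hjj' => hook_lt_hook hjj' hj'

lemma hook_add_hook_zero_ne (hL : IsPartition L) {i j k : ℕ} (hj : j < L.getD i 0) (hik : i < k)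
    (hk : k < L.length) : hook L i j + hook L k 0 ≠ hook L i 0 := by
  rw [hook_eq_card, hook_zero hL hk, hook_zero hL (hik.trans hk)]
  have hki := hL.getD_le_getD hik.le hk
  rcases le_or_gt (L.getD k 0) j with hkj | hkj
  · have : #{k' ∈ Ioo i L.length | j < L.getD k' 0} ≤ #(Ioo i k) := by
      refine card_le_card fun k' hk' => ?_
      simp only [mem_filter, mem_Ioo] at hk' ⊢
      refine ⟨hk'.1.1, ?_⟩
      by_contra hge
      have := hL.getD_le_getD (not_lt.mp hge) hk'.1.2
      omega
    rw [Nat.card_Ioo] at this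
    omega
  · have : #(Ioc i k) ≤ #{k' ∈ Ioo i L.length | j < L.getD k' 0} := by
      refine card_le_card fun k' hk' => ?_
      simp only [mem_filter, mem_Ioo, mem_Ioc] at hk' ⊢
      have := hL.getD_le_getD hk'.2 hk
      exact ⟨⟨hk'.1, by omega⟩, by omega⟩
    rw [Nat.card_Ioc] at this
    omega

lemma card_firstColHooks_lt_hook_zero (hL : IsPartition L) {i : ℕ} (hi : i < L.length) :
    #{x ∈ firstColHooks L | x < hook L i 0} = L.length - 1 - i := by
  have : {x ∈ firstColHooks L | x < hook L i 0} = (Ioo i L.length).image (hook L · 0) := by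
    ext x
    simp only [mem_filter, mem_firstColHooks, mem_image, mem_Ioo]
    constructor
    · rintro ⟨⟨k, hk, rfl⟩, hlt⟩
      exact ⟨k, ⟨lt_of_not_ge fun hki => (hook_zero_le_hook_zero hL hki hi).not_gt hlt, hk⟩, rfl⟩
    · rintro ⟨k, ⟨hik, hk⟩, rfl⟩
      exact ⟨⟨k, hk, rfl⟩, hook_zero_lt hL hik hk⟩
  rw [this, Finset.card_image_of_injOn ((hook_zero_injOn hL).mono fun k hk => (mem_Ioo.mp hk).2),
    Nat.card_Ioo]
  omega

lemma card_filter_sub_mem_firstColHooks (hL : IsPartition L) {i : ℕ} (hi : i < L.length) :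
    #{d ∈ Icc 1 (hook L i 0) | hook L i 0 - d ∈ firstColHooks L} = L.length - 1 - i := by
  rw [← card_firstColHooks_lt_hook_zero hL hi]
  refine card_nbij' (hook L i 0 - ·) (hook L i 0 - ·) (fun d hd => ?_) (fun x hx => ?_)
    (fun d hd => ?_) (fun x hx => ?_)
  · simp only [coe_filter, mem_Icc, Set.mem_ofPred_eq] at hd ⊢
    exact ⟨hd.2, by omega⟩
  · simp only [coe_filter, mem_Icc, Set.mem_ofPred_eq] at hx ⊢
    have := hL.pos_of_mem_firstColHooks hx.1
    exact ⟨by omega, by rw [Nat.sub_sub_self hx.2.le]; exact hx.1⟩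
  · simp only [coe_filter, mem_Icc, Set.mem_ofPred_eq] at hd
    exact Nat.sub_sub_self hd.1.2
  · simp only [coe_filter, Set.mem_ofPred_eq] at hx
    exact Nat.sub_sub_self hx.2.le

lemma image_hook_row (hL : IsPartition L) {i : ℕ} (hi : i < L.length) :
    (range (L.getD i 0)).image (hook L i) =
      {d ∈ Icc 1 (hook L i 0) | hook L i 0 - d ∉ firstColHooks L} := by
  refine eq_of_subset_of_card_le (fun d hd => ?_) ?_
  · obtain ⟨j, hj, rfl⟩ := mem_image.mp hd
    have hj := mem_range.mp hj
    have hle := hook_pos_and_le hL hi hj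
    refine mem_filter.mpr ⟨mem_Icc.mpr ⟨hle.1, hle.2⟩, fun hmem => ?_⟩
    obtain ⟨k, hk, hkeq⟩ := mem_firstColHooks.mp hmem
    rcases le_or_gt k i with hki | hik
    · have := hook_zero_le_hook_zero hL hki hi
      omega
    · exact hook_add_hook_zero_ne hL hj hik hk (by omega)
  · have hsplit := card_filter_add_card_filter_not (s := Icc 1 (hook L i 0))
      (fun d => hook L i 0 - d ∈ firstColHooks L)
    rw [Nat.card_Icc, card_filter_sub_mem_firstColHooks hL hi] at hsplit
    rw [Finset.card_image_of_injOn fun j hj j' hj' => hook_injOn_row i (by simpa using hj)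
      (by simpa using hj'), card_range]
    have := hook_zero hL hi
    omega

end Hooks

lemma IsFlush.pos {n : ℕ} {H : Finset ℕ} (hH : IsFlush n H) {h : ℕ} (hh : h ∈ H) : 0 < h :=
  Nat.pos_of_ne_zero fun h0 => hH.1 h hh (h0 ▸ dvd_zero n)

lemma IsFlush.sub_mul_mem {n : ℕ} {H : Finset ℕ} (hH : IsFlush n H) {h : ℕ} (hh : h ∈ H) :
    ∀ {t : ℕ}, n * t < h → h - n * t ∈ H
  | 0, _ => by simpa using hh
  | t + 1, ht => by
    have hmem := hH.sub_mul_mem hh (t := t) (by nlinarith)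
    rw [mul_add_one, ← Nat.sub_sub]
    exact hH.2 _ hmem (by rw [mul_add_one] at ht; omega)

theorem isCore_iff_isFlush {n : ℕ} {L : List ℕ} (hL : IsPartition L) :
    IsCore n L ↔ IsFlush n (firstColHooks L) := by
  constructor
  · intro hcore
    refine ⟨fun h hh => ?_, fun h hh hnh => ?_⟩
    · obtain ⟨i, hi, rfl⟩ := mem_firstColHooks.mp hh
      exact hcore i hi 0 (hL.getD_pos hi)
    · obtain ⟨i, hi, rfl⟩ := mem_firstColHooks.mp hh
      rcases Nat.eq_zero_or_pos n with rfl | hn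
      · simpa using hh
      have hrow : n ∉ (range (L.getD i 0)).image (hook L i) := by
        simp only [mem_image, mem_range, not_exists, not_and]
        exact fun j hj hjn => hcore i hi j hj (hjn ▸ dvd_refl n)
      rw [image_hook_row hL hi] at hrow
      simp only [mem_filter, mem_Icc, not_and, not_not] at hrow
      exact hrow ⟨hn, hnh.le⟩
  · rintro hflush i hi j hj ⟨t, ht⟩
    have hrow : hook L i j ∈ (range (L.getD i 0)).image (hook L i) :=
      mem_image_of_mem _ (mem_range.mpr hj)
    rw [image_hook_row hL hi, mem_filter, mem_Icc] at hrow
    have hh : hook L i 0 ∈ firstColHooks L := mem_firstColHooks.mpr ⟨i, hi, rfl⟩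
    have hne : n * t ≠ hook L i 0 := fun he => hflush.1 _ hh ⟨t, he.symm⟩
    exact hrow.2 (ht ▸ hflush.sub_mul_mem hh (lt_of_le_of_ne (ht ▸ hrow.1.2) hne))

def partitionOfHooks (H : Finset ℕ) : List ℕ :=
  (H.sort (· ≥ ·)).mapIdx fun i h => h - (#H - 1 - i)

section partitionOfHooks

variable {H : Finset ℕ}

lemma length_partitionOfHooks : (partitionOfHooks H).length = #H := by
  simp [partitionOfHooks]

lemma card_sub_le_getElem_sort (hH : ∀ h ∈ H, 0 < h) {i : ℕ} (hi : i < (H.sort (· ≥ ·)).length) :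
    #H - i ≤ (H.sort (· ≥ ·))[i] := by
  have hlen := length_sort (s := H) (· ≥ ·)
  have hlast := (sortedGT_sort H).pairwise.getElem_add_le (i := i) (j := #H - 1) (by omega)
    (by omega)
  have := hH _ ((mem_sort _).mp (List.getElem_mem (l := H.sort (· ≥ ·)) (n := #H - 1) (by omega)))
  omega

lemma getD_partitionOfHooks_add (hH : ∀ h ∈ H, 0 < h) {i : ℕ} (hi : i < #H) :
    (partitionOfHooks H).getD i 0 + (#H - 1 - i) = (H.sort (· ≥ ·))[i]'(by simpa using hi) := by
  rw [List.getD_eq_getElem _ _ (by simpa [partitionOfHooks] using hi)]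
  simp only [partitionOfHooks, List.getElem_mapIdx]
  have := card_sub_le_getElem_sort hH (i := i) (by simpa using hi)
  omega

lemma isPartition_partitionOfHooks (hH : ∀ h ∈ H, 0 < h) : IsPartition (partitionOfHooks H) := by
  refine ⟨List.pairwise_iff_getElem.mpr fun i j hi hj hij => ?_, fun x hx => ?_⟩
  · rw [length_partitionOfHooks] at hi hj
    rw [← List.getD_eq_getElem _ 0, ← List.getD_eq_getElem _ 0]
    have hi' := getD_partitionOfHooks_add hH hi
    have hj' := getD_partitionOfHooks_add hH hj
    have := (sortedGT_sort H).pairwise.getElem_add_le hij.le (by simpa using hj)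
    omega
  · obtain ⟨i, hi, rfl⟩ := List.getElem_of_mem hx
    rw [length_partitionOfHooks] at hi
    rw [← List.getD_eq_getElem _ 0]
    have := getD_partitionOfHooks_add hH hi
    have := card_sub_le_getElem_sort hH (i := i) (by simpa using hi)
    omega

lemma hook_zero_partitionOfHooks (hH : ∀ h ∈ H, 0 < h) {i : ℕ} (hi : i < #H) :
    hook (partitionOfHooks H) i 0 = (H.sort (· ≥ ·))[i]'(by simpa using hi) := by
  rw [hook_zero (isPartition_partitionOfHooks hH) (by rwa [length_partitionOfHooks]),
    length_partitionOfHooks, getD_partitionOfHooks_add hH hi]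

theorem firstColHooks_partitionOfHooks (hH : ∀ h ∈ H, 0 < h) :
    firstColHooks (partitionOfHooks H) = H := by
  ext x
  rw [mem_firstColHooks, length_partitionOfHooks, ← mem_sort (· ≥ ·), List.mem_iff_getElem]
  simp only [length_sort]
  constructor
  · rintro ⟨i, hi, rfl⟩
    exact ⟨i, hi, (hook_zero_partitionOfHooks hH hi).symm⟩
  · rintro ⟨i, hi, rfl⟩
    exact ⟨i, hi, hook_zero_partitionOfHooks hH hi⟩

end partitionOfHooks

theorem partitionOfHooks_firstColHooks {L : List ℕ} (hL : IsPartition L) :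
    partitionOfHooks (firstColHooks L) = L := by
  have hcard : #(firstColHooks L) = L.length := by
    rw [firstColHooks, Finset.card_image_of_injOn (by simpa using hook_zero_injOn hL), card_range]
  have hsort : (firstColHooks L).sort (· ≥ ·) = (List.range L.length).map (hook L · 0) := by
    have hnodup : ((List.range L.length).map (hook L · 0)).Nodup :=
      List.nodup_range.map_on fun i hi j hj => hook_zero_injOn hL (by simpa using hi)
        (by simpa using hj)
    have hset : firstColHooks L = ((List.range L.length).map (hook L · 0)).toFinset := by
      ext; simp [firstColHooks]
    rw [hset, List.toFinset_sort _ hnodup]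
    refine List.pairwise_iff_getElem.mpr fun i j hi hj hij => ?_
    simp only [List.getElem_map, List.getElem_range]
    exact (hook_zero_lt hL hij (by simpa using hj)).le
  refine List.ext_getElem (by rw [length_partitionOfHooks, hcard]) fun i hi hi' => ?_
  rw [length_partitionOfHooks, hcard] at hi
  rw [← List.getD_eq_getElem _ 0, ← List.getD_eq_getElem _ 0]
  have := getD_partitionOfHooks_add (fun _ => hL.pos_of_mem_firstColHooks) (hcard ▸ hi)
  simp only [hsort, List.getElem_map, List.getElem_range, hcard, hook_zero hL hi] at this
  omega

lemma IsFlush.isCore_partitionOfHooks {n : ℕ} {H : Finset ℕ} (hH : IsFlush n H) :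
    IsCore n (partitionOfHooks H) := by
  rwa [isCore_iff_isFlush (isPartition_partitionOfHooks fun _ => hH.pos),
    firstColHooks_partitionOfHooks fun _ => hH.pos]

section Path

variable {m n : ℕ} {D : List Bool}

lemma nSteps_mono : Monotone (nSteps D) := fun i j hij => by
  simpa [nSteps, List.take_take, min_eq_left hij] using
    ((D.take j).take_prefix i).sublist.count_le true

lemma nSteps_add_eSteps_s13 {i : ℕ} (hi : i ≤ D.length) : nSteps D i + eSteps D i = i := by
  rw [nSteps, eSteps, List.count_true_add_count_false, List.length_take, min_eq_left hi]

lemma nSteps_add_one {i : ℕ} (hi : i < D.length) :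
    nSteps D (i + 1) = nSteps D i + if D.getD i true then 1 else 0 := by
  rw [nSteps, nSteps, List.take_add_one, List.getElem?_eq_getElem hi, List.count_append,
    List.getD_eq_getElem _ _ hi]
  cases D[i] <;> simp

lemma eSteps_eq_card {i : ℕ} (hi : i ≤ D.length) :
    eSteps D i = #{k ∈ Finset.range i | D.getD k true = false} := by
  rw [eSteps, List.count_eq_countP, List.countP_take_eq_card D _ true hi]
  simp

lemma southX_eq_card (y : ℕ) :
    southX D y = #{k ∈ Finset.range D.length | D.getD k true = false ∧ nSteps D k ≤ y} := by
  rw [← Nat.count_eq_card_filter_range]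
  simp [Nat.count, southX, nSteps]

lemma southX_mono : Monotone (southX D) := fun y y' hyy' => by
  simp only [southX_eq_card]
  exact card_le_card fun k hk => by
    simp only [mem_filter] at hk ⊢
    exact ⟨hk.1, hk.2.1, hk.2.2.trans hyy'⟩

variable (hP : IsPath m n D)
include hP

lemma IsPath.nSteps_le (i : ℕ) : nSteps D i ≤ n :=
  hP.2 ▸ (D.take_sublist i).count_le true

lemma IsPath.nSteps_length : nSteps D (m + n) = n := by
  rw [nSteps, ← hP.1, List.take_length, hP.2]

lemma IsPath.eSteps_le (i : ℕ) : eSteps D i ≤ m := by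
  have := List.count_true_add_count_false D
  have := (D.take_sublist i).count_le false
  rw [hP.1, hP.2] at *
  rw [eSteps]
  omega

lemma IsPath.exists_north_step {b : ℕ} (hb : b < n) :
    ∃ p < m + n, nSteps D p = b ∧ D.getD p true = true := by
  have hlast : b < nSteps D (m + n - 1 + 1) := by
    rw [Nat.sub_add_cancel (by omega), hP.nSteps_length]
    exact hb
  have hex : ∃ p, b < nSteps D (p + 1) := ⟨_, hlast⟩
  have hlt : Nat.find hex < m + n := by
    have := Nat.find_min' hex hlast
    omega
  have hle : nSteps D (Nat.find hex) ≤ b := by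
    rcases Nat.eq_zero_or_pos (Nat.find hex) with h0 | h0
    · rw [h0]
      simp [nSteps]
    · have := Nat.find_min hex (show Nat.find hex - 1 < Nat.find hex by omega)
      rwa [Nat.sub_add_cancel h0, not_lt] at this
  have hstep := nSteps_add_one (D := D) (i := Nat.find hex) (by rw [hP.1]; exact hlt)
  have hspec := Nat.find_spec hex
  refine ⟨Nat.find hex, hlt, ?_, ?_⟩ <;> split_ifs at hstep with h <;> omega

lemma IsPath.southX_add_north_step {b : ℕ} (hb : b < n) :
    southX D b + b < m + n ∧ nSteps D (southX D b + b) = b ∧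
      D.getD (southX D b + b) true = true := by
  obtain ⟨p, hp, hpb, hpt⟩ := hP.exists_north_step hb
  have hlen := hP.1
  have hstep := nSteps_add_one (D := D) (i := p) (by omega)
  rw [hpt, if_pos rfl, hpb] at hstep
  have hle_iff : ∀ k, nSteps D k ≤ b ↔ k ≤ p := fun k => by
    constructor
    · intro hk; by_contra hpk; have := nSteps_mono (D := D) (show p + 1 ≤ k by omega); omega
    · intro hk; exact hpb ▸ nSteps_mono hk
  have hsouth : southX D b = eSteps D p := by
    rw [southX_eq_card, eSteps_eq_card (by omega)]
    congr 1
    ext k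
    simp only [mem_filter, Finset.mem_range, hle_iff]
    constructor
    · rintro ⟨hk, hkf, hkp⟩
      refine ⟨lt_of_le_of_ne hkp ?_, hkf⟩
      rintro rfl
      exact Bool.false_ne_true (hkf.symm.trans hpt)
    · rintro ⟨hkp, hkf⟩
      exact ⟨by omega, hkf, hkp.le⟩
  have := nSteps_add_eSteps_s13 (D := D) (i := p) (by omega)
  obtain rfl : southX D b + b = p := by omega
  exact ⟨hp, hpb, hpt⟩

lemma IsPath.nSteps_le_iff {b i : ℕ} (hb : b < n) :
    nSteps D i ≤ b ↔ i ≤ southX D b + b := by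
  obtain ⟨hlt, hnb, htrue⟩ := hP.southX_add_north_step hb
  have hstep := nSteps_add_one (D := D) (i := southX D b + b) (by rw [hP.1]; exact hlt)
  rw [htrue, if_pos rfl, hnb] at hstep
  constructor
  · intro hi
    by_contra h
    have := nSteps_mono (D := D) (show southX D b + b + 1 ≤ i by omega)
    omega
  · intro hi; exact hnb ▸ nSteps_mono hi

lemma IsPath.getD_eq_true_iff {i : ℕ} (hi : i < m + n) :
    D.getD i true = true ↔ ∃ b < n, i = southX D b + b := by
  constructor
  · intro htrue
    have hstep := nSteps_add_one (D := D) (i := i) (by rw [hP.1]; exact hi)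
    rw [htrue, if_pos rfl] at hstep
    have hbn : nSteps D i < n := by have := hP.nSteps_le (i + 1); omega
    have h1 := (hP.nSteps_le_iff hbn (i := i)).mp le_rfl
    have h2 := (hP.nSteps_le_iff hbn (i := i + 1)).not.mp (by omega)
    exact ⟨_, hbn, by omega⟩
  · rintro ⟨b, hb, rfl⟩
    exact (hP.southX_add_north_step hb).2.2

theorem IsPath.isDyck_iff : IsDyck m n D ↔ ∀ b < n, n * southX D b ≤ m * b := by
  constructor
  · intro hD b hb
    obtain ⟨hlt, hnb, -⟩ := hP.southX_add_north_step hb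
    have hrank := hD.2 _ hlt.le
    have := nSteps_add_eSteps_s13 (D := D) (i := southX D b + b) (by rw [hP.1]; exact hlt.le)
    rw [rank, hnb, show eSteps D (southX D b + b) = southX D b by omega] at hrank
    exact_mod_cast sub_nonneg.mp hrank
  · refine fun hx => ⟨hP, fun i hi => ?_⟩
    rw [rank, sub_nonneg]
    have hsum := nSteps_add_eSteps_s13 (D := D) (i := i) (by rw [hP.1]; exact hi)
    rcases (hP.nSteps_le (i := i)).eq_or_lt with hn | hb
    · rw [hn]
      exact_mod_cast (Nat.mul_le_mul_left n (hP.eSteps_le i)).trans_eq (mul_comm n m)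
    · have := (hP.nSteps_le_iff hb (i := i)).mp le_rfl
      have := Nat.mul_le_mul_left n (show eSteps D i ≤ southX D (nSteps D i) by omega)
      exact_mod_cast this.trans (hx _ hb)

lemma IsPath.lt_of_strictlyRightOf {a b : ℕ} (h : StrictlyRightOf m n D a b) : b < n := by
  obtain ⟨ha, hb, hright⟩ := h
  refine lt_of_le_of_ne hb fun hbn => ?_
  have := hright (m + n) le_rfl (hbn ▸ hP.nSteps_length)
  have := nSteps_add_eSteps_s13 (D := D) (i := m + n) hP.1.ge
  rw [hP.nSteps_length] at this
  change eSteps D (m + n) < a at *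
  omega

lemma IsPath.strictlyRightOf_iff {a b : ℕ} (hb : b < n) :
    StrictlyRightOf m n D a b ↔ a ≤ m ∧ southX D b < a := by
  constructor
  · rintro ⟨ha, -, hright⟩
    obtain ⟨hlt, hnb, -⟩ := hP.southX_add_north_step hb
    have := hright _ hlt.le hnb
    have := nSteps_add_eSteps_s13 (D := D) (i := southX D b + b) (by rw [hP.1]; exact hlt.le)
    change nSteps D _ = b at hnb
    change eSteps D _ < a at *
    exact ⟨ha, by omega⟩
  · rintro ⟨ha, hxa⟩
    refine ⟨ha, hb.le, fun i hi hib => ?_⟩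
    have := (hP.nSteps_le_iff hb (i := i)).mp hib.le
    have := nSteps_add_eSteps_s13 (D := D) (i := i) (by rw [hP.1]; exact hi)
    change nSteps D i = b at hib
    change eSteps D i < a
    omega

end Path

def pathOfSouthX (m n : ℕ) (x : ℕ → ℕ) : List Bool :=
  List.ofFn fun i : Fin (m + n) => decide (∃ b < n, (i : ℕ) = x b + b)

section PathOfSouthX

variable {m n : ℕ} {x x' : ℕ → ℕ}

lemma length_pathOfSouthX : (pathOfSouthX m n x).length = m + n := by
  simp [pathOfSouthX]

lemma getD_pathOfSouthX {i : ℕ} (hi : i < m + n) :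
    (pathOfSouthX m n x).getD i true = decide (∃ b < n, i = x b + b) := by
  rw [List.getD_eq_getElem _ _ (by rwa [length_pathOfSouthX])]
  simp [pathOfSouthX]

lemma pathOfSouthX_congr (h : ∀ b < n, x b = x' b) : pathOfSouthX m n x = pathOfSouthX m n x' := by
  simp only [pathOfSouthX]
  congr 1
  funext i
  simp only [decide_eq_decide]
  exact ⟨fun ⟨b, hb, hi⟩ => ⟨b, hb, h b hb ▸ hi⟩, fun ⟨b, hb, hi⟩ => ⟨b, hb, (h b hb).symm ▸ hi⟩⟩

lemma IsPath.pathOfSouthX_southX {D : List Bool} (hP : IsPath m n D) :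
    pathOfSouthX m n (southX D) = D := by
  refine List.ext_getElem (by rw [length_pathOfSouthX, hP.1]) fun i hi _ => ?_
  rw [length_pathOfSouthX] at hi
  rw [← List.getD_eq_getElem _ true, ← List.getD_eq_getElem _ true, getD_pathOfSouthX hi,
    Bool.eq_iff_iff, decide_eq_true_iff, hP.getD_eq_true_iff hi]

variable (hx : MonotoneOn x (Set.Iio n))
include hx

lemma MonotoneOn.strictMonoOn_add_id : StrictMonoOn (fun b => x b + b) (Set.Iio n) :=
  fun _ ha _ hb hab => by have := hx ha hb hab.le; dsimp only; omega

lemma nSteps_pathOfSouthX {i : ℕ} (hi : i ≤ m + n) :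
    nSteps (pathOfSouthX m n x) i = #{b ∈ range n | x b + b < i} := by
  rw [nSteps, List.count_eq_countP, List.countP_take_eq_card _ _ true (by
    rwa [length_pathOfSouthX])]
  have : {k ∈ range i | ((pathOfSouthX m n x).getD k true == true) = true} =
      {b ∈ range n | x b + b < i}.image (fun b => x b + b) := by
    ext k
    simp only [mem_filter, Finset.mem_range, mem_image, beq_iff_eq]
    constructor
    · rintro ⟨hk, hkt⟩
      rw [getD_pathOfSouthX (by omega), decide_eq_true_eq] at hkt
      obtain ⟨b, hb, rfl⟩ := hkt
      exact ⟨b, ⟨hb, hk⟩, rfl⟩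
    · rintro ⟨b, ⟨hb, hbi⟩, rfl⟩
      exact ⟨hbi, by rw [getD_pathOfSouthX (by omega), decide_eq_true_eq]; exact ⟨b, hb, rfl⟩⟩
  rw [this, Finset.card_image_of_injOn (hx.strictMonoOn_add_id.injOn.mono fun b hb => by
    simp only [coe_filter, Finset.mem_range, Set.mem_ofPred_eq] at hb
    exact hb.1)]

lemma nSteps_pathOfSouthX_le_iff {b i : ℕ} (hb : b < n) (hi : i ≤ m + n) :
    nSteps (pathOfSouthX m n x) i ≤ b ↔ i ≤ x b + b := by
  rw [nSteps_pathOfSouthX hx hi]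
  constructor
  · intro hcard
    by_contra hlt
    have : range (b + 1) ⊆ {c ∈ range n | x c + c < i} := fun c hc => by
      rw [Finset.mem_range] at hc
      have : x c + c ≤ x b + b := by have := hx (by simp; omega) (by simpa) (by omega : c ≤ b); omega
      simp only [mem_filter, Finset.mem_range]
      omega
    have := card_le_card this
    rw [card_range] at this
    omega
  · intro hle
    have : {c ∈ range n | x c + c < i} ⊆ range b := fun c hc => by
      simp only [mem_filter, Finset.mem_range] at hc ⊢
      by_contra hcb
      have := hx (by simpa) (by simpa using hc.1) (not_lt.mp hcb)
      omega
    simpa using card_le_card this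

variable (hdy : ∀ b < n, n * x b ≤ m * b)
include hdy

lemma isPath_pathOfSouthX : IsPath m n (pathOfSouthX m n x) := by
  refine ⟨length_pathOfSouthX, ?_⟩
  have hfull := nSteps_pathOfSouthX (m := m) hx le_rfl
  rw [nSteps, List.take_of_length_le length_pathOfSouthX.le] at hfull
  rw [hfull, filter_true_of_mem fun b hb => ?_, card_range]
  have hb := Finset.mem_range.mp hb
  have := le_of_mul_le_mul_of_lt hb (hdy b hb)
  omega

lemma southX_pathOfSouthX {b : ℕ} (hb : b < n) : southX (pathOfSouthX m n x) b = x b := by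
  have hP := isPath_pathOfSouthX hx hdy
  have hlt := (hP.southX_add_north_step hb).1
  have hxb : x b + b ≤ m + n := by have := le_of_mul_le_mul_of_lt hb (hdy b hb); omega
  have h1 := (hP.nSteps_le_iff hb).mp ((nSteps_pathOfSouthX_le_iff hx hb hxb).mpr le_rfl)
  have h2 := (nSteps_pathOfSouthX_le_iff hx hb hlt.le).mp ((hP.nSteps_le_iff hb).mpr le_rfl)
  omega

lemma isDyck_pathOfSouthX : IsDyck m n (pathOfSouthX m n x) := by
  rw [(isPath_pathOfSouthX hx hdy).isDyck_iff]
  intro b hb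
  rw [southX_pathOfSouthX hx hdy hb]
  exact hdy b hb

end PathOfSouthX

def andersonFinset (m n : ℕ) (x : ℕ → ℕ) : Finset ℕ :=
  (range n).biUnion fun b => ((Ioc (x b) m).filter (n * · < m * b)).image (m * b - n * ·)

section AndersonFinset

variable {m n : ℕ} {x x' : ℕ → ℕ}

lemma mem_andersonFinset {h : ℕ} :
    h ∈ andersonFinset m n x ↔ ∃ b < n, ∃ a, x b < a ∧ n * a < m * b ∧ h = m * b - n * a := by
  simp only [andersonFinset, mem_biUnion, mem_image, mem_filter, mem_Ioc, Finset.mem_range]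
  constructor
  · rintro ⟨b, hb, a, ⟨⟨hxa, -⟩, hab⟩, rfl⟩
    exact ⟨b, hb, a, hxa, hab, rfl⟩
  · rintro ⟨b, hb, a, hxa, hab, rfl⟩
    exact ⟨b, hb, a, ⟨⟨hxa, (lt_of_mul_lt_mul_of_lt hb hab).le⟩, hab⟩, rfl⟩

lemma andersonFinset_congr (h : ∀ b < n, x b = x' b) : andersonFinset m n x = andersonFinset m n x' :=
  biUnion_congr rfl fun b hb => by rw [h b (Finset.mem_range.mp hb)]

theorem IsPath.coe_andersonFinset_southX {D : List Bool} (hP : IsPath m n D) :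
    (andersonFinset m n (southX D) : Set ℕ) = andersonSet m n D := by
  ext h
  simp only [mem_coe, mem_andersonFinset, andersonSet, Set.mem_ofPred_eq]
  constructor
  · rintro ⟨b, hb, a, hxa, hab, rfl⟩
    refine ⟨by omega, a, b, (hP.strictlyRightOf_iff hb).mpr
      ⟨(lt_of_mul_lt_mul_of_lt hb hab).le, hxa⟩, by push_cast [hab.le]; ring⟩
  · rintro ⟨hpos, a, b, hright, hrank⟩
    have hb := hP.lt_of_strictlyRightOf hright
    have hab : n * a < m * b := by zify; omega
    exact ⟨b, hb, a, ((hP.strictlyRightOf_iff hb).mp hright).2, hab, by zify [hab.le]; omega⟩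

variable (hco : Nat.Coprime m n)
include hco

lemma Nat.Coprime.not_dvd_mul_of_lt {b : ℕ} (hb0 : 0 < b) (hb : b < n) : ¬ n ∣ m * b :=
  fun hdvd => (Nat.le_of_dvd hb0 (hco.symm.dvd_of_dvd_mul_left hdvd)).not_gt hb

lemma Nat.Coprime.eq_of_mul_add_mul_eq {a a' b b' : ℕ} (hb : b < n) (hb' : b' < n)
    (h : m * b + n * a' = m * b' + n * a) : b = b' := by
  have hmod : m * b ≡ m * b' [MOD n] := by
    have := congrArg (· % n) h
    simpa [Nat.ModEq, Nat.add_mul_mod_self_left] using this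
  simpa [Nat.ModEq, Nat.mod_eq_of_lt hb, Nat.mod_eq_of_lt hb'] using
    hmod.cancel_left_of_coprime hco.symm

lemma sub_mem_andersonFinset_iff {a b : ℕ} (hb : b < n) (hab : n * a < m * b) :
    m * b - n * a ∈ andersonFinset m n x ↔ x b < a := by
  refine ⟨fun h => ?_, fun hxa => mem_andersonFinset.mpr ⟨b, hb, a, hxa, hab, rfl⟩⟩
  obtain ⟨b', hb', a', hxa', hab', heq⟩ := mem_andersonFinset.mp h
  obtain rfl : b = b' := hco.eq_of_mul_add_mul_eq hb hb' (a := a) (a' := a') (by omega)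
  obtain rfl : a = a' :=
    Nat.eq_of_mul_eq_mul_left (show 0 < n by omega) (show n * a = n * a' by omega)
  exact hxa'

lemma isFlush_andersonFinset_right : IsFlush n (andersonFinset m n x) := by
  refine ⟨fun h hh hdvd => ?_, fun h hh hnh => ?_⟩
  · obtain ⟨b, hb, a, -, hab, rfl⟩ := mem_andersonFinset.mp hh
    refine hco.not_dvd_mul_of_lt (Nat.pos_of_ne_zero ?_) hb ?_
    · rintro rfl; simp at hab
    · simpa [Nat.sub_add_cancel hab.le] using dvd_add hdvd (dvd_mul_right n a)
  · obtain ⟨b, hb, a, hxa, hab, rfl⟩ := mem_andersonFinset.mp hh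
    refine mem_andersonFinset.mpr ⟨b, hb, a + 1, by omega, by rw [mul_add_one]; omega, ?_⟩
    rw [mul_add_one]
    omega

lemma isFlush_andersonFinset_left (hx : MonotoneOn x (Set.Iio n)) :
    IsFlush m (andersonFinset m n x) := by
  refine ⟨fun h hh hdvd => ?_, fun h hh hmh => ?_⟩
  · obtain ⟨b, hb, a, hxa, hab, rfl⟩ := mem_andersonFinset.mp hh
    have hma : m ∣ a := hco.dvd_of_dvd_mul_left <| by
      simpa [Nat.sub_sub_self hab.le] using Nat.dvd_sub (dvd_mul_right m b) hdvd
    exact (Nat.le_of_dvd (by omega) hma).not_gt (lt_of_mul_lt_mul_of_lt hb hab)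
  · obtain ⟨b, hb, a, hxa, hab, rfl⟩ := mem_andersonFinset.mp hh
    have hb0 : 0 < b := Nat.pos_of_ne_zero (by rintro rfl; simp at hab)
    have hmb : m * b = m * (b - 1) + m := by rw [← mul_add_one, Nat.sub_add_cancel hb0]
    refine mem_andersonFinset.mpr ⟨b - 1, by omega, a, ?_, by omega, by omega⟩
    exact (hx (by simp; omega) (by simpa using hb) (by omega)).trans_lt hxa

lemma le_of_andersonFinset_eq (hx' : ∀ b < n, n * x' b ≤ m * b)
    (h : andersonFinset m n x = andersonFinset m n x') {b : ℕ} (hb : b < n) : x' b ≤ x b := by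
  rcases Nat.eq_zero_or_pos b with rfl | hb0
  · have : x' 0 = 0 := by simpa [hb.ne'] using hx' 0 hb
    omega
  by_contra hlt
  have hab : n * x' b < m * b :=
    lt_of_le_of_ne (hx' b hb) fun he => hco.not_dvd_mul_of_lt hb0 hb ⟨x' b, he.symm⟩
  have := sub_mem_andersonFinset_iff (x := x) hco hb hab
  rw [h, sub_mem_andersonFinset_iff hco hb hab] at this
  exact lt_irrefl _ (this.mpr (not_le.mp hlt))

lemma eq_of_andersonFinset_eq (hx : ∀ b < n, n * x b ≤ m * b) (hx' : ∀ b < n, n * x' b ≤ m * b)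
    (h : andersonFinset m n x = andersonFinset m n x') {b : ℕ} (hb : b < n) : x b = x' b :=
  le_antisymm (le_of_andersonFinset_eq hco hx h.symm hb) (le_of_andersonFinset_eq hco hx' h hb)

end AndersonFinset

section FlushSets

variable {m n : ℕ} {H : Finset ℕ}

lemma IsFlush.add_mul_mem_iff (hH : IsFlush n H) {r : ℕ} (hr : 0 < r) (hrn : r < n) (t : ℕ) :
    r + n * t ∈ H ↔ t < #{h ∈ H | h % n = r} := by
  set T := {h ∈ H | h % n = r}.image (· / n)
  have hmemT : ∀ t, t ∈ T ↔ r + n * t ∈ H := fun t => by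
    simp only [T, mem_image, mem_filter]
    constructor
    · rintro ⟨h, ⟨hh, hmod⟩, rfl⟩
      rwa [← hmod, Nat.mod_add_div]
    · intro ht
      refine ⟨r + n * t, ⟨ht, by simp [Nat.mod_eq_of_lt hrn]⟩, ?_⟩
      rw [Nat.add_mul_div_left _ _ (by omega), Nat.div_eq_of_lt hrn, zero_add]
  have hcard : #T = #{h ∈ H | h % n = r} := card_image_of_injOn fun h₁ h₁H h₂ h₂H heq => by
    simp only [coe_filter, Set.mem_ofPred_eq] at h₁H h₂H
    rw [← Nat.mod_add_div h₁ n, ← Nat.mod_add_div h₂ n, h₁H.2, h₂H.2]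
    exact congrArg (r + n * ·) heq
  have hlower : IsLowerSet (T : Set ℕ) := fun t s hst ht => by
    rw [mem_coe, hmemT] at ht ⊢
    have := hH.sub_mul_mem ht (t := t - s) (by
      have := Nat.mul_le_mul_left n (Nat.sub_le t s); omega)
    have hns := Nat.mul_le_mul_left n hst
    rwa [Nat.mul_sub, show r + n * t - (n * t - n * s) = r + n * s by omega] at this
  obtain hT | ⟨k, hk⟩ := hlower.eq_univ_or_Iio
  · exact absurd (hT ▸ T.finite_toSet) Set.infinite_univ
  · have hTk : T = range k := coe_injective (by rw [hk, coe_range])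
    rw [← hmemT, ← hcard, hTk, card_range, Finset.mem_range]

lemma IsFlush.lt_mul_of_modEq (hfm : IsFlush m H) (hfn : IsFlush n H) {h b : ℕ} (hh : h ∈ H)
    (hmod : h ≡ m * b [MOD n]) : h < m * b := by
  induction b generalizing h with
  | zero => exact absurd (Nat.modEq_zero_iff_dvd.mp (by simpa using hmod)) (hfn.1 h hh)
  | succ b ih =>
    rcases lt_trichotomy h m with hlt | rfl | hgt
    · exact hlt.trans_le (Nat.le_mul_of_pos_right m b.succ_pos)
    · exact absurd (dvd_refl h) (hfm.1 h hh)
    · have hmod' : h - m ≡ m * b [MOD n] :=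
        Nat.ModEq.add_right_cancel' m (by rwa [Nat.sub_add_cancel hgt.le, ← mul_add_one])
      have := ih (hfm.2 h hh hgt) hmod'
      rw [mul_add_one]
      omega

def southXOfHooks (m n : ℕ) (H : Finset ℕ) (b : ℕ) : ℕ :=
  m * b / n - #{h ∈ H | h % n = m * b % n}

lemma mul_southXOfHooks_le (b : ℕ) : n * southXOfHooks m n H b ≤ m * b :=
  (Nat.mul_le_mul_left n (Nat.sub_le _ _)).trans (Nat.mul_div_le (m * b) n)

variable (hco : Nat.Coprime m n) (hfm : IsFlush m H) (hfn : IsFlush n H)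
include hco hfm hfn

lemma sub_mem_iff_southXOfHooks_lt {a b : ℕ} (hb : b < n) (hab : n * a < m * b) :
    m * b - n * a ∈ H ↔ southXOfHooks m n H b < a := by
  have hb0 : 0 < b := Nat.pos_of_ne_zero (by rintro rfl; simp at hab)
  have hr : 0 < m * b % n :=
    Nat.pos_of_ne_zero fun h0 => hco.not_dvd_mul_of_lt hb0 hb (Nat.dvd_of_mod_eq_zero h0)
  have hrn : m * b % n < n := Nat.mod_lt _ (by omega)
  have hqr := Nat.div_add_mod (m * b) n
  have haq : a ≤ m * b / n := (Nat.le_div_iff_mul_le (by omega)).mpr (by linarith)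
  have hkq : #{h ∈ H | h % n = m * b % n} ≤ m * b / n := by
    -- otherwise `m * b` itself would lie in `H`
    by_contra hlt
    have := (hfn.add_mul_mem_iff hr hrn (m * b / n)).mpr (not_le.mp hlt)
    rw [add_comm, hqr] at this
    exact lt_irrefl _ (hfm.lt_mul_of_modEq hfn this rfl)
  have hsub : m * b - n * a = m * b % n + n * (m * b / n - a) := by
    rw [Nat.mul_sub]
    have := Nat.mul_le_mul_left n haq
    omega
  rw [hsub, hfn.add_mul_mem_iff hr hrn, southXOfHooks]
  omega

lemma monotoneOn_southXOfHooks : MonotoneOn (southXOfHooks m n H) (Set.Iio n) := by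
  refine monotoneOn_of_le_succ Set.ordConnected_Iio fun b _ hb hb1 => ?_
  rw [Order.succ_eq_add_one] at hb1 ⊢
  rw [Set.mem_Iio] at hb hb1
  rcases Nat.eq_zero_or_pos b with rfl | hb0
  · simp [southXOfHooks]
  by_contra hlt
  set a := southXOfHooks m n H b
  have hab : n * a < m * b := lt_of_le_of_ne (mul_southXOfHooks_le b)
    fun he => hco.not_dvd_mul_of_lt hb0 hb ⟨a, he.symm⟩
  have hab' : n * a < m * (b + 1) := hab.trans_le (Nat.mul_le_mul_left m b.le_succ)
  have hmem := (sub_mem_iff_southXOfHooks_lt hco hfm hfn hb1 hab').mpr (not_le.mp hlt)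
  rw [Nat.mul_add_one] at hmem
  have hmem' := hfm.2 _ hmem (by omega)
  rw [show m * b + m - n * a - m = m * b - n * a by omega,
    sub_mem_iff_southXOfHooks_lt hco hfm hfn hb hab] at hmem'
  exact lt_irrefl a hmem'

theorem andersonFinset_southXOfHooks (hn : 0 < n) :
    andersonFinset m n (southXOfHooks m n H) = H := by
  ext h
  rw [mem_andersonFinset]
  constructor
  · rintro ⟨b, hb, a, hxa, hab, rfl⟩
    exact (sub_mem_iff_southXOfHooks_lt hco hfm hfn hb hab).mpr hxa
  · intro hh
    obtain ⟨b, hb, hmod⟩ := Nat.exists_mul_mod_eq_of_coprime h hco hn.ne'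
    have hlt := hfm.lt_mul_of_modEq hfn hh hmod.symm
    obtain ⟨a, ha⟩ := (Nat.modEq_iff_dvd' hlt.le).mp hmod.symm
    have hab : n * a < m * b := by have := hfn.pos hh; omega
    refine ⟨b, hb, a, ?_, hab, by omega⟩
    rw [← sub_mem_iff_southXOfHooks_lt hco hfm hfn hb hab, ← ha, Nat.sub_sub_self hlt.le]
    exact hh

end FlushSets

section AndersonMap

variable {m n : ℕ} (hco : Nat.Coprime m n)

def andersonMap :
    {D : List Bool // IsDyck m n D} → {L : List ℕ // IsPartition L ∧ IsCore m L ∧ IsCore n L} :=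
  fun D =>
    have hm := isFlush_andersonFinset_left (x := southX D.1) hco (southX_mono.monotoneOn _)
    have hn := isFlush_andersonFinset_right (x := southX D.1) hco
    ⟨partitionOfHooks (andersonFinset m n (southX D.1)),
      isPartition_partitionOfHooks fun _ => hn.pos, hm.isCore_partitionOfHooks,
      hn.isCore_partitionOfHooks⟩

lemma firstColHooks_andersonMap (D : {D : List Bool // IsDyck m n D}) :
    firstColHooks (andersonMap hco D).1 = andersonFinset m n (southX D.1) :=
  firstColHooks_partitionOfHooks fun _ => (isFlush_andersonFinset_right hco).pos

lemma andersonMap_injective : Function.Injective (andersonMap hco) := by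
  intro D D' h
  have hA : andersonFinset m n (southX D.1) = andersonFinset m n (southX D'.1) := by
    rw [← firstColHooks_andersonMap hco, ← firstColHooks_andersonMap hco, h]
  have hdy := D.2.1.isDyck_iff.mp D.2
  have hdy' := D'.2.1.isDyck_iff.mp D'.2
  apply Subtype.ext
  rw [← D.2.1.pathOfSouthX_southX, ← D'.2.1.pathOfSouthX_southX]
  exact pathOfSouthX_congr fun b hb => eq_of_andersonFinset_eq hco hdy hdy' hA hb

lemma andersonMap_surjective (hn : 0 < n) : Function.Surjective (andersonMap hco) := by
  rintro ⟨L, hL, hcm, hcn⟩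
  have hfm := (isCore_iff_isFlush hL).mp hcm
  have hfn := (isCore_iff_isFlush hL).mp hcn
  have hmono := monotoneOn_southXOfHooks hco hfm hfn
  have hdy : ∀ b < n, n * southXOfHooks m n (firstColHooks L) b ≤ m * b :=
    fun b _ => mul_southXOfHooks_le b
  refine ⟨⟨pathOfSouthX m n (southXOfHooks m n (firstColHooks L)),
    isDyck_pathOfSouthX hmono hdy⟩, Subtype.ext ?_⟩
  change partitionOfHooks _ = L
  rw [andersonFinset_congr fun b hb => southX_pathOfSouthX hmono hdy hb,
    andersonFinset_southXOfHooks hco hfm hfn hn, partitionOfHooks_firstColHooks hL]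

end AndersonMap

theorem anderson_bijection_general (m n : ℕ) (hn : 0 < n)
    (hco : Nat.Coprime m n) :
    ∃ α : {D : List Bool // IsDyck m n D} →
        {L : List ℕ // IsPartition L ∧ IsCore m L ∧ IsCore n L},
      Function.Bijective α ∧
        ∀ D, (↑(firstColHooks (α D).1) : Set ℕ) = andersonSet m n D.1 :=
  ⟨andersonMap hco, ⟨andersonMap_injective hco, andersonMap_surjective hco hn⟩, fun D => by
    rw [firstColHooks_andersonMap, D.2.1.coe_andersonFinset_southX]⟩

/-- Anderson's bijection: for coprime positive `m, n` there is a
bijection `α` from `(m,n)`-Dyck paths to `(m,n)`-cores such that the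
first-column hook lengths of `α(D)` are exactly the positive ranks of the
lattice points lying strictly to the right of `D`. -/
theorem anderson_bijection (m n : ℕ) (hm : 0 < m) (hn : 0 < n)
    (hco : Nat.Coprime m n) :
    ∃ α : {D : List Bool // IsDyck m n D} →
        {L : List ℕ // IsPartition L ∧ IsCore m L ∧ IsCore n L},
      Function.Bijective α ∧
        ∀ D, (↑(firstColHooks (α D).1) : Set ℕ) = andersonSet m n D.1 :=
  anderson_bijection_general m n hn hco
end
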